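/- arXiv:1707.00763 — 2 statements merged into one kernel-verified Lean document; each statement's English description precedes it below -/
import Mathlib

section
/- (Theorem 1.) Fix real α, β > 0, φ, μ, h_t ∈ ℝ, and set τ² = e^{μ}, κ_t = 1/(1 + e^{h_t}). Let η be a random variable with distribution Z(α, β, 0, 1), and define h_{t+1} = μ + φ(h_t − μ) + η. Then the distribution of κ_{t+1} = 1/(1 + e^{h_{t+1}}) is TPB(β, α, γ_t) with γ_t = τ^{2(1−φ)} [(1 − κ_t)/κ_t]^{φ}; equivalently, the pushforward of Z(α, β, μ + φ(h_t − μ), 1) under η ↦ 1/(1+e^η) equals TPB(β, α, τ^{2(1−φ)} [(1 − κ_t)/κ_t]^{φ}). -/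
/-!
The map `κ = 1 / (1 + e^h)` is a diffeomorphism `ℝ → (0, 1)` with inverse
`h = log (1 - κ) - log κ` and `|dh/dκ| = 1 / (κ (1 - κ))`. Hence the pushforward of
`Z(α, β, m, 1)` has density `f_Z(h(κ)) / (κ (1 - κ))` on `(0, 1)`; since
`e^{h(κ) - m} = (1 - κ) / (γ κ)` and `1 + e^{h(κ) - m} = (1 + (γ - 1) κ) / (γ κ)` with `γ = e^m`,
this is exactly the `TPB(β, α, γ)` density. For `m = μ + φ (h_t - μ)` one has
`e^m = (e^μ)^{1-φ} (e^{h_t})^φ` and `e^{h_t} = (1 - κ_t) / κ_t`.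
-/

open Real MeasureTheory

/-- The Beta function `B(a, b) = Γ(a) Γ(b) / Γ(a + b)`. -/
noncomputable def realBeta (a b : ℝ) : ℝ := Real.Gamma a * Real.Gamma b / Real.Gamma (a + b)

/-- The `Z`-distribution `Z(α, β, μ, 1)`: the measure on `ℝ` with Lebesgue density
`z ↦ [B(α, β)]⁻¹ [exp(z−μ)]^α [1 + exp(z−μ)]^{−(α+β)}`. -/
noncomputable def zMeasure (α β μz : ℝ) : Measure ℝ :=
  volume.withDensity
    (fun z => ENNReal.ofReal
      ((realBeta α β)⁻¹ * Real.exp (z - μz) ^ α * (1 + Real.exp (z - μz)) ^ (-(α + β))))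

/-- The three-parameter Beta distribution `TPB(β, α, γ)`: the measure on `(0, 1)` with Lebesgue
density `κ ↦ [B(β, α)]⁻¹ γ^β κ^{β−1} (1−κ)^{α−1} [1 + (γ−1)κ]^{−(α+β)}`. -/
noncomputable def tpbMeasure (β α γ : ℝ) : Measure ℝ :=
  (volume.restrict (Set.Ioo (0:ℝ) 1)).withDensity
    (fun κ => ENNReal.ofReal
      ((realBeta β α)⁻¹ * γ ^ β * κ ^ (β - 1) * (1 - κ) ^ (α - 1)
        * (1 + (γ - 1) * κ) ^ (-(α + β))))

open Set Function

theorem map_withDensity_eq_withDensity_of_leftInverse {g h h' : ℝ → ℝ} {s : Set ℝ}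
    (hs : MeasurableSet s) (hg : Measurable g) (hg_range : range g = s)
    (hhg : LeftInverse h g) (hh' : ∀ y ∈ s, HasDerivWithinAt h (h' y) s y)
    (f : ℝ → ENNReal) :
    (volume.withDensity f).map g
      = (volume.restrict s).withDensity fun y => ENNReal.ofReal |h' y| * f (h y) := by
  subst hg_range
  have hinj : InjOn h (range g) := by
    rintro _ ⟨x, rfl⟩ _ ⟨x', rfl⟩ hxx'
    rw [hhg x, hhg x'] at hxx'
    exact congrArg g hxx'
  ext t ht
  have himage : h '' (t ∩ range g) = g ⁻¹' t := by
    ext x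
    constructor
    · rintro ⟨_, ⟨hyt, x', rfl⟩, rfl⟩
      rwa [mem_preimage, hhg]
    · exact fun hx => ⟨g x, ⟨hx, x, rfl⟩, hhg x⟩
  rw [Measure.map_apply hg ht, withDensity_apply _ (hg ht), withDensity_apply _ ht,
    Measure.restrict_restrict ht, ← himage,
    lintegral_image_eq_lintegral_abs_deriv_mul (ht.inter hs)
      (fun y hy => (hh' y hy.2).mono inter_subset_right) (hinj.mono inter_subset_right)]

lemma realBeta_comm (a b : ℝ) : realBeta a b = realBeta b a := by
  rw [realBeta, realBeta, add_comm, mul_comm]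

namespace DynamicShrinkage

noncomputable def shrinkage (h : ℝ) : ℝ := 1 / (1 + exp h)

noncomputable def shrinkageInv (κ : ℝ) : ℝ := log (1 - κ) - log κ

lemma shrinkage_mem_Ioo (h : ℝ) : shrinkage h ∈ Ioo 0 1 := by
  have : 0 < exp h := exp_pos h
  constructor
  · unfold shrinkage; positivity
  · rw [shrinkage, div_lt_one (by positivity)]; linarith

lemma one_sub_shrinkage_div_shrinkage (h : ℝ) : (1 - shrinkage h) / shrinkage h = exp h := by
  have : 0 < 1 + exp h := by positivity
  rw [shrinkage]
  field_simp
  ring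

lemma shrinkageInv_shrinkage : LeftInverse shrinkageInv shrinkage := fun h => by
  have hpos : 0 < 1 + exp h := by positivity
  have hcompl : 1 - shrinkage h = exp h / (1 + exp h) := by
    rw [shrinkage]; field_simp; ring
  rw [shrinkageInv, hcompl, shrinkage, log_div (exp_ne_zero h) hpos.ne', log_exp, one_div,
    log_inv]
  ring

lemma shrinkage_shrinkageInv {κ : ℝ} (hκ : κ ∈ Ioo 0 1) : shrinkage (shrinkageInv κ) = κ := by
  obtain ⟨h0, h1⟩ := hκ
  rw [shrinkage, shrinkageInv, exp_sub, exp_log (by linarith), exp_log h0]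
  field_simp
  ring

lemma range_shrinkage : range shrinkage = Ioo 0 1 :=
  Subset.antisymm (range_subset_iff.2 shrinkage_mem_Ioo)
    fun κ hκ => ⟨shrinkageInv κ, shrinkage_shrinkageInv hκ⟩

lemma measurable_shrinkage : Measurable shrinkage :=
  measurable_const.div (measurable_const.add measurable_exp)

lemma hasDerivAt_shrinkageInv {κ : ℝ} (hκ : κ ∈ Ioo 0 1) :
    HasDerivAt shrinkageInv (-(κ * (1 - κ))⁻¹) κ := by
  obtain ⟨h0, h1⟩ := hκ
  have hlog : HasDerivAt (fun y => log (1 - y)) (-1 / (1 - κ)) κ := by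
    simpa using ((hasDerivAt_id κ).const_sub 1).log (by simp; linarith)
  refine (hlog.sub (hasDerivAt_log h0.ne')).congr_deriv ?_
  have : 1 - κ ≠ 0 := by linarith
  field_simp
  ring

lemma abs_deriv_shrinkageInv_mul_zDensity {κ : ℝ} (hκ : κ ∈ Ioo 0 1) (α β m : ℝ) :
    |-(κ * (1 - κ))⁻¹| * ((realBeta α β)⁻¹ * exp (shrinkageInv κ - m) ^ α
        * (1 + exp (shrinkageInv κ - m)) ^ (-(α + β)))
      = (realBeta β α)⁻¹ * exp m ^ β * κ ^ (β - 1) * (1 - κ) ^ (α - 1)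
        * (1 + (exp m - 1) * κ) ^ (-(α + β)) := by
  obtain ⟨h0, h1⟩ := hκ
  have h1' : 0 < 1 - κ := by linarith
  have hD : 0 < 1 + (exp m - 1) * κ := by nlinarith [exp_pos m]
  set a := log κ
  set b := log (1 - κ)
  set d := log (1 + (exp m - 1) * κ)
  have hsum : 1 + exp (shrinkageInv κ - m) = exp (d - a - m) := by
    rw [shrinkageInv, exp_sub, exp_sub, exp_sub, exp_sub, exp_log h1', exp_log h0, exp_log hD]
    field_simp
    ring
  have habs : |-(κ * (1 - κ))⁻¹| = exp (-(a + b)) := by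
    rw [abs_neg, abs_of_pos (by positivity), exp_neg, exp_add, exp_log h0, exp_log h1', mul_inv]
  -- every factor is now the exponential of a linear form in `a`, `b`, `d` and `m`
  rw [habs, hsum, ← exp_mul, ← exp_mul, ← exp_mul, rpow_def_of_pos h0, rpow_def_of_pos h1',
    rpow_def_of_pos hD, realBeta_comm, shrinkageInv]
  calc _ = (realBeta β α)⁻¹ * exp (-(a + b) + (b - a - m) * α + (d - a - m) * -(α + β)) := by
        simp only [exp_add]; ring
    _ = (realBeta β α)⁻¹ * exp (m * β + a * (β - 1) + b * (α - 1) + d * -(α + β)) := by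
        congr 2; ring
    _ = _ := by simp only [exp_add]; ring

theorem map_shrinkage_zMeasure (α β m : ℝ) :
    (zMeasure α β m).map shrinkage = tpbMeasure β α (exp m) := by
  rw [zMeasure, tpbMeasure, map_withDensity_eq_withDensity_of_leftInverse measurableSet_Ioo
    measurable_shrinkage range_shrinkage shrinkageInv_shrinkage
    fun κ hκ => (hasDerivAt_shrinkageInv hκ).hasDerivWithinAt]
  refine withDensity_congr_ae ((ae_restrict_iff' measurableSet_Ioo).2
    (Filter.Eventually.of_forall fun κ hκ => ?_))
  dsimp only
  rw [← ENNReal.ofReal_mul (abs_nonneg _), abs_deriv_shrinkageInv_mul_zDensity hκ]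

end DynamicShrinkage

theorem dhs_conditional_tpb_general (α β φ μ ht : ℝ) :
    Measure.map (fun η : ℝ => 1 / (1 + Real.exp η)) (zMeasure α β (μ + φ * (ht - μ)))
      = tpbMeasure β α
          ((Real.exp μ) ^ (1 - φ)
            * ((1 - 1 / (1 + Real.exp ht)) / (1 / (1 + Real.exp ht))) ^ φ) := by
  open DynamicShrinkage in
  have hγ : exp μ ^ (1 - φ) * ((1 - shrinkage ht) / shrinkage ht) ^ φ
      = exp (μ + φ * (ht - μ)) := by
    rw [one_sub_shrinkage_div_shrinkage, ← exp_mul, ← exp_mul, ← exp_add]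
    ring_nf
  exact hγ ▸ DynamicShrinkage.map_shrinkage_zMeasure α β _

/-- Theorem 1: with `τ² = e^{μ}` and `κ_t = 1/(1 + e^{h_t})`, if
`h_{t+1} = μ + φ(h_t − μ) + η` with `η ~ Z(α, β, 0, 1)`, then
`κ_{t+1} = 1/(1 + e^{h_{t+1}})` has distribution
`TPB(β, α, τ^{2(1−φ)} [(1 − κ_t)/κ_t]^{φ})`; i.e. the pushforward of
`Z(α, β, μ + φ(h_t − μ), 1)` under `η ↦ 1/(1 + e^{η})` equals this TPB distribution. -/
theorem dhs_conditional_tpb (α β φ μ ht : ℝ) (hα : 0 < α) (hβ : 0 < β) :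
    Measure.map (fun η : ℝ => 1 / (1 + Real.exp η)) (zMeasure α β (μ + φ * (ht - μ)))
      = tpbMeasure β α
          ((Real.exp μ) ^ (1 - φ)
            * ((1 - 1 / (1 + Real.exp ht)) / (1 / (1 + Real.exp ht))) ^ φ) :=
  dhs_conditional_tpb_general α β φ μ ht
end

section
/- For every γ ∈ (0, 1), ε ∈ (0, 1), δ ∈ (0, 1), and y ∈ ℝ, with g_{y,γ}(κ) = (1−κ)^{−1/2} [1 + (γ−1)κ]⁻¹ exp(−y²κ/2) on (0, 1), the following bound holds: ∫_ε^1 g_{y,γ}(κ) dκ / ∫₀¹ g_{y,γ}(κ) dκ ≤ exp(−y² ε (1 − δ)/2) · γ⁻¹ · 2 (1 − ε)^{1/2} / (δ ε). -/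
open Real MeasureTheory

/-- The unnormalized posterior density of the shrinkage parameter `κ` under the conditional
`TPB(1/2, 1/2, γ)` prior and the marginal likelihood `[y | κ] ~ N(0, κ⁻¹)`:
`g_{y,γ}(κ) = (1−κ)^{−1/2} [1 + (γ−1)κ]⁻¹ exp(−y²κ/2)`. -/
noncomputable def gPost (y γ κ : ℝ) : ℝ :=
  (1 - κ) ^ (-(1:ℝ)/2) * (1 + (γ - 1) * κ)⁻¹ * Real.exp (-y ^ 2 * κ / 2)

/-! On `(0, 1)` the prior factor `[1 + (γ−1)κ]⁻¹` lies between `1` and `γ⁻¹`. Hence the numerator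
is at most `γ⁻¹ exp(−y²ε/2) ∫_ε^1 (1−κ)^{−1/2} dκ = γ⁻¹ exp(−y²ε/2) · 2(1−ε)^{1/2}`, while the
denominator is at least the integral of `exp(−y²κ/2) ≥ exp(−y²δε/2)` over `(0, δε)`, i.e.
`δε exp(−y²δε/2)`. Dividing, the exponentials combine to `exp(−y²ε(1−δ)/2)`. -/

lemma integrableOn_one_sub_rpow_Ioo {r a : ℝ} (hr : -1 < r) (ha : a ≤ 1) :
    IntegrableOn (fun κ : ℝ => (1 - κ) ^ r) (Set.Ioo a 1) := by
  have h := (intervalIntegral.intervalIntegrable_rpow' (a := 0) (b := 1 - a) hr).comp_sub_left 1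
  rw [sub_zero, sub_sub_cancel] at h
  exact (intervalIntegrable_iff_integrableOn_Ioo_of_le ha).mp h.symm

lemma integral_one_sub_rpow_Ioo {r a : ℝ} (hr : -1 < r) (ha : a ≤ 1) :
    ∫ κ in Set.Ioo a 1, (1 - κ) ^ r = (1 - a) ^ (r + 1) / (r + 1) := by
  rw [← integral_Ioc_eq_integral_Ioo, ← intervalIntegral.integral_of_le ha,
    intervalIntegral.integral_comp_sub_left (fun x : ℝ => x ^ r) 1, sub_self,
    integral_rpow (Or.inl hr), zero_rpow (by linarith), sub_zero]

section gPost

variable {y γ κ : ℝ}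

lemma measurable_gPost : Measurable (gPost y γ) := by
  unfold gPost
  fun_prop

lemma gPost_nonneg (hγ : 0 ≤ γ) (hκ : κ ∈ Set.Ioo (0:ℝ) 1) : 0 ≤ gPost y γ κ := by
  have : 0 < 1 + (γ - 1) * κ := by nlinarith [hκ.1, hκ.2]
  have : 0 < (1 - κ) ^ (-(1:ℝ)/2) := rpow_pos_of_pos (by linarith [hκ.2]) _
  unfold gPost
  positivity

lemma gPost_le (hγ : γ ∈ Set.Ioc (0:ℝ) 1) (hκ : κ ∈ Set.Ioo (0:ℝ) 1) :
    gPost y γ κ ≤ γ⁻¹ * (1 - κ) ^ (-(1:ℝ)/2) * exp (-y ^ 2 * κ / 2) := by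
  have hprior : (1 + (γ - 1) * κ)⁻¹ ≤ γ⁻¹ := inv_anti₀ hγ.1 (by nlinarith [hγ.2, hκ.2])
  have : 0 < (1 - κ) ^ (-(1:ℝ)/2) := rpow_pos_of_pos (by linarith [hκ.2]) _
  unfold gPost
  rw [mul_comm γ⁻¹]
  gcongr

lemma exp_le_gPost (hγ : γ ∈ Set.Icc (0:ℝ) 1) (hκ : κ ∈ Set.Ioo (0:ℝ) 1) :
    exp (-y ^ 2 * κ / 2) ≤ gPost y γ κ := by
  have hlik : 1 ≤ (1 - κ) ^ (-(1:ℝ)/2) :=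
    one_le_rpow_of_pos_of_le_one_of_nonpos (by linarith [hκ.2]) (by linarith [hκ.1]) (by norm_num)
  have hprior : 1 ≤ (1 + (γ - 1) * κ)⁻¹ :=
    one_le_inv₀ (by nlinarith [hγ.1, hκ.1, hκ.2]) |>.mpr (by nlinarith [hγ.2, hκ.1])
  calc exp (-y ^ 2 * κ / 2) = 1 * 1 * exp (-y ^ 2 * κ / 2) := by ring
    _ ≤ gPost y γ κ := by unfold gPost; gcongr

lemma integrableOn_gPost (hγ : γ ∈ Set.Ioc (0:ℝ) 1) :
    IntegrableOn (gPost y γ) (Set.Ioo (0:ℝ) 1) := by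
  have hdom :=
    (integrableOn_one_sub_rpow_Ioo (r := -(1:ℝ)/2) (by norm_num) zero_le_one).const_mul γ⁻¹
  refine hdom.mono' measurable_gPost.aestronglyMeasurable.restrict ?_
  filter_upwards [ae_restrict_mem measurableSet_Ioo] with κ hκ
  rw [norm_of_nonneg (gPost_nonneg hγ.1.le hκ)]
  calc gPost y γ κ ≤ γ⁻¹ * (1 - κ) ^ (-(1:ℝ)/2) * exp (-y ^ 2 * κ / 2) := gPost_le hγ hκ
    _ ≤ γ⁻¹ * (1 - κ) ^ (-(1:ℝ)/2) * 1 := by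
        have := hγ.1
        have : 0 < (1 - κ) ^ (-(1:ℝ)/2) := rpow_pos_of_pos (by linarith [hκ.2]) _
        gcongr
        exact exp_le_one_iff.mpr (by nlinarith [hκ.1, sq_nonneg y])
    _ = γ⁻¹ * (1 - κ) ^ (-(1:ℝ)/2) := mul_one _

lemma setIntegral_gPost_Ioo_le {ε : ℝ} (hγ : γ ∈ Set.Ioc (0:ℝ) 1) (hε : ε ∈ Set.Icc (0:ℝ) 1) :
    ∫ κ in Set.Ioo ε 1, gPost y γ κ ≤ exp (-y ^ 2 * ε / 2) * γ⁻¹ * (2 * (1 - ε) ^ ((1:ℝ)/2)) := by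
  have hsub : Set.Ioo ε 1 ⊆ Set.Ioo (0:ℝ) 1 := Set.Ioo_subset_Ioo_left hε.1
  have htail : ∫ κ in Set.Ioo ε 1, (1 - κ) ^ (-(1:ℝ)/2) = 2 * (1 - ε) ^ ((1:ℝ)/2) := by
    rw [integral_one_sub_rpow_Ioo (by norm_num) hε.2]
    norm_num
    ring
  rw [← htail, ← integral_const_mul]
  refine setIntegral_mono_on ((integrableOn_gPost hγ).mono_set hsub)
    ((integrableOn_one_sub_rpow_Ioo (by norm_num) hε.2).const_mul _) measurableSet_Ioo
    fun κ hκ => ?_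
  have := hγ.1
  have : 0 < (1 - κ) ^ (-(1:ℝ)/2) := rpow_pos_of_pos (by linarith [hκ.2]) _
  calc gPost y γ κ ≤ γ⁻¹ * (1 - κ) ^ (-(1:ℝ)/2) * exp (-y ^ 2 * κ / 2) := gPost_le hγ (hsub hκ)
    _ ≤ γ⁻¹ * (1 - κ) ^ (-(1:ℝ)/2) * exp (-y ^ 2 * ε / 2) := by
        gcongr _ * ?_
        exact exp_le_exp.mpr (by nlinarith [hκ.1, sq_nonneg y])
    _ = exp (-y ^ 2 * ε / 2) * γ⁻¹ * (1 - κ) ^ (-(1:ℝ)/2) := by ring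

lemma mul_exp_le_setIntegral_gPost {b : ℝ} (hγ : γ ∈ Set.Ioc (0:ℝ) 1) (hb : b ∈ Set.Icc (0:ℝ) 1) :
    b * exp (-y ^ 2 * b / 2) ≤ ∫ κ in Set.Ioo (0:ℝ) 1, gPost y γ κ := by
  have hsub : Set.Ioo 0 b ⊆ Set.Ioo (0:ℝ) 1 := Set.Ioo_subset_Ioo_right hb.2
  calc b * exp (-y ^ 2 * b / 2) = ∫ _ in Set.Ioo (0:ℝ) b, exp (-y ^ 2 * b / 2) := by
        rw [setIntegral_const, Real.volume_real_Ioo_of_le hb.1, sub_zero, smul_eq_mul]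
    _ ≤ ∫ κ in Set.Ioo (0:ℝ) b, gPost y γ κ := by
        refine setIntegral_mono_on (integrableOn_const (by simp))
          ((integrableOn_gPost hγ).mono_set hsub) measurableSet_Ioo fun κ hκ => ?_
        calc exp (-y ^ 2 * b / 2) ≤ exp (-y ^ 2 * κ / 2) :=
              exp_le_exp.mpr (by nlinarith [hκ.2, sq_nonneg y])
          _ ≤ gPost y γ κ := exp_le_gPost ⟨hγ.1.le, hγ.2⟩ (hsub hκ)
    _ ≤ ∫ κ in Set.Ioo (0:ℝ) 1, gPost y γ κ :=
        setIntegral_mono_set (integrableOn_gPost hγ)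
          (ae_restrict_of_forall_mem measurableSet_Ioo fun _ hκ => gPost_nonneg hγ.1.le hκ)
          hsub.eventuallyLE

end gPost

/-- Explicit bound in the proof of Theorem 3(b): for every `γ ∈ (0, 1)`, `ε ∈ (0, 1)`,
`δ ∈ (0, 1)`, `y ∈ ℝ`,
`∫_ε^1 g_{y,γ} / ∫₀¹ g_{y,γ} ≤ exp(−y² ε (1 − δ)/2) γ⁻¹ 2 (1 − ε)^{1/2} / (δ ε)`. -/
theorem dhs_posterior_robustness_bound (γ ε δ y : ℝ) (hγ : γ ∈ Set.Ioo (0:ℝ) 1)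
    (hε : ε ∈ Set.Ioo (0:ℝ) 1) (hδ : δ ∈ Set.Ioo (0:ℝ) 1) :
    (∫ κ in Set.Ioo ε 1, gPost y γ κ) / (∫ κ in Set.Ioo (0:ℝ) 1, gPost y γ κ)
      ≤ Real.exp (-y ^ 2 * ε * (1 - δ) / 2) * γ⁻¹ * 2 * (1 - ε) ^ ((1:ℝ)/2) / (δ * ε) := by
  have hγ' : γ ∈ Set.Ioc (0:ℝ) 1 := Set.Ioo_subset_Ioc_self hγ
  have hδε : δ * ε ∈ Set.Icc (0:ℝ) 1 :=
    ⟨by nlinarith [hδ.1, hε.1], by nlinarith [hδ.1, hδ.2, hε.1, hε.2]⟩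
  have hδε_pos : 0 < δ * ε * exp (-y ^ 2 * (δ * ε) / 2) := by
    have := mul_pos hδ.1 hε.1
    positivity
  calc (∫ κ in Set.Ioo ε 1, gPost y γ κ) / (∫ κ in Set.Ioo (0:ℝ) 1, gPost y γ κ)
      ≤ exp (-y ^ 2 * ε / 2) * γ⁻¹ * (2 * (1 - ε) ^ ((1:ℝ)/2))
          / (δ * ε * exp (-y ^ 2 * (δ * ε) / 2)) := by
        have : 0 ≤ (1 - ε) ^ ((1:ℝ)/2) := rpow_nonneg (by linarith [hε.2]) _
        exact div_le_div₀ (by have := hγ.1; positivity)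
          (setIntegral_gPost_Ioo_le hγ' (Set.Ioo_subset_Icc_self hε)) hδε_pos
          (mul_exp_le_setIntegral_gPost hγ' hδε)
    _ = exp (-y ^ 2 * ε * (1 - δ) / 2) * γ⁻¹ * 2 * (1 - ε) ^ ((1:ℝ)/2) / (δ * ε) := by
        rw [show -y ^ 2 * ε / 2 = -y ^ 2 * ε * (1 - δ) / 2 + -y ^ 2 * (δ * ε) / 2 by ring, exp_add]
        field_simp
end
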